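/- Let G be a finite group and let M ≥ 1. Consider the complex vector space of all functions ψ : (Fin M → G) → ℂ satisfying ψ(g h₁ g⁻¹, …, g h_M g⁻¹) = ψ(h₁, …, h_M) for all g ∈ G and all tuples (h₁,…,h_M). Then the complex dimension of this space of simultaneously-conjugation-invariant functions equals the sum over the conjugacy classes C of G of (|G| / |C|)^(M−1). -/
import Mathlib

open MulAction

/-- The `ℂ`-submodule of functions `ψ : (Fin M → G) → ℂ` invariant under simultaneous
conjugation of all `M` arguments. -/
noncomputable def simultaneousConjugationInvariants (G : Type) [Group G] (M : ℕ) :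
    Submodule ℂ ((Fin M → G) → ℂ) where
  carrier := {ψ | ∀ (g : G) (h : Fin M → G), ψ (fun i => g * h i * g⁻¹) = ψ h}
  add_mem' := by
    intro a b ha hb g h
    simp only [Pi.add_apply, ha g h, hb g h]
  zero_mem' := by intro g h; rfl
  smul_mem' := by
    intro c ψ hψ g h
    simp only [Pi.smul_apply, hψ g h]


section Aux

variable {G : Type} [Group G] [Fintype G] [DecidableEq G] {M : ℕ}

/-- The orbit space of the simultaneous conjugation action. -/
private abbrev ConjOrbits (G : Type) [Group G] (M : ℕ) :=
  Quotient (orbitRel (ConjAct G) (Fin M → G))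

noncomputable instance : Fintype (ConjOrbits G M) := Fintype.ofFinite _

private def fixedByPiEquiv (a : ConjAct G) :
    fixedBy (Fin M → G) a ≃ (Fin M → fixedBy G a) where
  toFun h i := ⟨h.1 i, congrFun h.2 i⟩
  invFun f := ⟨fun i => (f i).1, funext fun i => (f i).2⟩
  left_inv h := rfl
  right_inv f := rfl

private def fixedByEquivStabilizer (a : ConjAct G) :
    fixedBy G a ≃ stabilizer (ConjAct G) (ConjAct.ofConjAct a) where
  toFun x := ⟨ConjAct.toConjAct x.1, by
    have hx : ConjAct.ofConjAct a * x.1 * (ConjAct.ofConjAct a)⁻¹ = x.1 := x.2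
    have hcomm : ConjAct.ofConjAct a * x.1 = x.1 * ConjAct.ofConjAct a :=
      mul_inv_eq_iff_eq_mul.mp hx
    simp [MulAction.mem_stabilizer_iff, ConjAct.smul_def, mul_assoc, ← hcomm]⟩
  invFun y := ⟨ConjAct.ofConjAct y.1, by
    have hy : ConjAct.ofConjAct y.1 * ConjAct.ofConjAct a * (ConjAct.ofConjAct y.1)⁻¹
        = ConjAct.ofConjAct a := by
      have := y.2
      rwa [MulAction.mem_stabilizer_iff, ConjAct.smul_def] at this
    have hcomm : ConjAct.ofConjAct y.1 * ConjAct.ofConjAct a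
        = ConjAct.ofConjAct a * ConjAct.ofConjAct y.1 :=
      mul_inv_eq_iff_eq_mul.mp hy
    show ConjAct.ofConjAct a * ConjAct.ofConjAct y.1 * (ConjAct.ofConjAct a)⁻¹
        = ConjAct.ofConjAct y.1
    rw [← hcomm, mul_inv_cancel_right]⟩
  left_inv x := rfl
  right_inv y := rfl

/-- The invariant functions are linearly equivalent to functions on the orbit space. -/
private noncomputable def invariantsEquiv (G : Type) [Group G] (M : ℕ) :
    simultaneousConjugationInvariants G M ≃ₗ[ℂ] (ConjOrbits G M → ℂ) where
  toFun ψ := Quotient.lift ψ.1 (by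
    rintro h h' ⟨g, rfl⟩
    exact ψ.2 (ConjAct.ofConjAct g) h')
  invFun f := ⟨fun h => f (Quotient.mk (orbitRel (ConjAct G) (Fin M → G)) h), fun g h =>
    congrArg f (Quotient.sound (MulAction.mem_orbit h (ConjAct.toConjAct g)))⟩
  map_add' ψ φ := by ext ⟨h⟩; rfl
  map_smul' c ψ := by ext ⟨h⟩; rfl
  left_inv ψ := rfl
  right_inv f := by ext ⟨h⟩; rfl

end Aux

/-- For a finite group `G` and `M ≥ 1`, the complex dimension of the space of
functions `ψ : (Fin M → G) → ℂ` invariant under simultaneous conjugation equals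
`∑_{conjugacy classes C} (|G| / |C|) ^ (M - 1)`. -/
theorem finrank_simultaneous_conjugation_invariants
    {G : Type} [Group G] [Fintype G] [DecidableEq G] (M : ℕ) (hM : 1 ≤ M) :
    Module.finrank ℂ (simultaneousConjugationInvariants G M) =
      ∑ C : ConjClasses G, (Nat.card G / Nat.card C.carrier) ^ (M - 1) := by
  classical
  obtain ⟨m, rfl⟩ : ∃ m, M = m + 1 := ⟨M - 1, (Nat.succ_pred_eq_of_pos hM).symm⟩
  rw [LinearEquiv.finrank_eq (invariantsEquiv G (m + 1)), Module.finrank_fintype_fun_eq_card]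
  simp only [Nat.add_sub_cancel]
  set s : ConjClasses G → ℕ := fun C => Nat.card G / Nat.card C.carrier with hs
  have hcpos : ∀ C : ConjClasses G, 0 < Nat.card C.carrier := by
    intro C
    obtain ⟨g, rfl⟩ := ConjClasses.mk_surjective C
    have : g ∈ (ConjClasses.mk g).carrier := ConjClasses.mem_carrier_iff_mk_eq.mpr rfl
    exact Nat.card_pos_iff.mpr ⟨⟨g, this⟩, Set.Finite.to_subtype (Set.toFinite _)⟩
  have horb : ∀ g : G, Nat.card (ConjClasses.mk g).carrier *
      Nat.card (stabilizer (ConjAct G) g) = Nat.card G := by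
    intro g
    have h := MulAction.card_orbit_mul_card_stabilizer_eq_card_group (ConjAct G) g
    simp only [← Nat.card_eq_fintype_card] at h
    rw [ConjAct.orbit_eq_carrier_conjClasses] at h
    exact h
  have hstab : ∀ g : G, Nat.card (stabilizer (ConjAct G) g) = s (ConjClasses.mk g) := fun g =>
    (Nat.div_eq_of_eq_mul_right (hcpos (ConjClasses.mk g)) (horb g).symm).symm
  have hfix : ∀ g : G, Fintype.card (fixedBy (Fin (m + 1) → G) (ConjAct.toConjAct g)) =
      s (ConjClasses.mk g) ^ (m + 1) := by
    intro g
    rw [← Nat.card_eq_fintype_card, Nat.card_congr (fixedByPiEquiv (ConjAct.toConjAct g)),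
      Nat.card_fun, Nat.card_congr (fixedByEquivStabilizer (ConjAct.toConjAct g)),
      Nat.card_eq_fintype_card (α := Fin (m + 1)), Fintype.card_fin]
    rw [show ConjAct.ofConjAct (ConjAct.toConjAct g) = g from rfl, hstab g]
  have hb := MulAction.sum_card_fixedBy_eq_card_orbits_mul_card_group (ConjAct G) (Fin (m + 1) → G)
  rw [← Fintype.sum_equiv ConjAct.toConjAct.toEquiv
    (fun g => Fintype.card (fixedBy (Fin (m + 1) → G) (ConjAct.toConjAct g))) _ (fun g => rfl)] at hb
  simp only [hfix] at hb
  have hfiber : ∑ g : G, s (ConjClasses.mk g) ^ (m + 1) =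
      ∑ C : ConjClasses G, Nat.card C.carrier * s C ^ (m + 1) := by
    rw [← Fintype.sum_fiberwise ConjClasses.mk (fun g => s (ConjClasses.mk g) ^ (m + 1))]
    refine Finset.sum_congr rfl fun C _ => ?_
    rw [Finset.sum_congr rfl (fun g _ => by rw [g.2]), Finset.sum_const, Finset.card_univ,
      ← Nat.card_eq_fintype_card,
      Nat.card_congr (Equiv.subtypeEquivRight
        (fun g => (ConjClasses.mem_carrier_iff_mk_eq (a := g)).symm)), smul_eq_mul]
  have hclass : ∀ C : ConjClasses G, Nat.card C.carrier * s C ^ (m + 1) = s C ^ m * Nat.card G := by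
    intro C
    obtain ⟨g, rfl⟩ := ConjClasses.mk_surjective C
    have h1 : Nat.card (ConjClasses.mk g).carrier * s (ConjClasses.mk g) = Nat.card G := by
      rw [← hstab g]; exact horb g
    calc Nat.card (ConjClasses.mk g).carrier * s (ConjClasses.mk g) ^ (m + 1)
        = s (ConjClasses.mk g) ^ m *
          (Nat.card (ConjClasses.mk g).carrier * s (ConjClasses.mk g)) := by
          rw [pow_succ]; ring
      _ = s (ConjClasses.mk g) ^ m * Nat.card G := by rw [h1]
  rw [hfiber] at hb
  rw [Finset.sum_congr rfl (fun C _ => hclass C), ← Finset.sum_mul] at hb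
  have hGpos : 0 < Fintype.card (ConjAct G) := Fintype.card_pos
  have := Nat.eq_of_mul_eq_mul_right hGpos
    (hb.symm.trans (by rw [Nat.card_eq_fintype_card]; rfl))
  exact this
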